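/- Let X be a finite connected edge-transitive simple graph with at least 3 vertices, and let N be a normal subgroup of Aut(X) of prime order such that the stabilizer in N of every vertex of X is trivial. Then the setwise stabilizer in N of every edge of X is trivial. -/

import Mathlib

/-!
If `n ∈ N` swaps the ends of an edge, then `n² = 1` fixes a vertex, so `n` is an involution
and `N = {1, n}`. A normal subgroup of order two is central, so by edge-transitivity `n` swaps
the ends of every edge. Then every vertex has at most one neighbour, and a connected such graph
has only two vertices.
-/

namespace HAT

variable {V : Type*} {W : Type*}

/-- The automorphism group of a simple graph, as a subgroup of the permutation
group of the vertex set. -/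
def autSubgroup (X : SimpleGraph V) : Subgroup (Equiv.Perm V) where
  carrier := {g | ∀ u v : V, X.Adj (g u) (g v) ↔ X.Adj u v}
  one_mem' := by intro u v; simp
  mul_mem' := by
    intro a b ha hb u v
    simp only [Equiv.Perm.mul_apply]
    rw [ha, hb]
  inv_mem' := by
    intro a ha u v
    have h := (ha (a⁻¹ u) (a⁻¹ v)).symm
    simpa using h

/-- A subgroup of the permutation group of the vertex set acts transitively on vertices. -/
def VertexTransitive (G : Subgroup (Equiv.Perm V)) : Prop :=
  ∀ u v : V, ∃ g ∈ G, g u = v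

/-- `G` acts transitively on the edges of `X`. -/
def EdgeTransitive (X : SimpleGraph V) (G : Subgroup (Equiv.Perm V)) : Prop :=
  ∀ ⦃u v x y : V⦄, X.Adj u v → X.Adj x y →
    ∃ g ∈ G, (g u = x ∧ g v = y) ∨ (g u = y ∧ g v = x)

/-- `G` acts transitively on the arcs of `X`. -/
def ArcTransitive (X : SimpleGraph V) (G : Subgroup (Equiv.Perm V)) : Prop :=
  ∀ ⦃u v x y : V⦄, X.Adj u v → X.Adj x y → ∃ g ∈ G, g u = x ∧ g v = y

/-- `G` acts sharply transitively (regularly) on the arcs of `X`. -/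
def ArcRegular (X : SimpleGraph V) (G : Subgroup (Equiv.Perm V)) : Prop :=
  ∀ ⦃u v x y : V⦄, X.Adj u v → X.Adj x y →
    ∃! g : G, (g : Equiv.Perm V) u = x ∧ (g : Equiv.Perm V) v = y

/-- `X` is `G`-half-arc-transitive. -/
def HalfArcTransitive (X : SimpleGraph V) (G : Subgroup (Equiv.Perm V)) : Prop :=
  VertexTransitive G ∧ EdgeTransitive X G ∧ ¬ ArcTransitive X G

/-- `X` is regular of degree `k`. -/
def RegularOfDegree (X : SimpleGraph V) (k : ℕ) : Prop :=
  ∀ v : V, Nat.card (X.neighborSet v) = k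

/-- A group of permutations acts semiregularly: all point stabilizers are trivial. -/
def Semiregular (N : Subgroup (Equiv.Perm V)) : Prop :=
  ∀ g ∈ N, (∃ v : V, g v = v) → g = 1

/-- A graph is a Cayley graph iff its automorphism group contains a subgroup
acting regularly (sharply transitively) on the vertices. -/
def IsCayleyGraph (X : SimpleGraph V) : Prop :=
  ∃ H : Subgroup (Equiv.Perm V), H ≤ autSubgroup X ∧
    ∀ u v : V, ∃! h : H, (h : Equiv.Perm V) u = v

/-- The set of `N`-orbits on the vertex set. -/
abbrev Orbits (N : Subgroup (Equiv.Perm V)) : Type _ := Quotient (MulAction.orbitRel N V)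

/-- The `N`-orbit of a vertex. -/
def orbitMk (N : Subgroup (Equiv.Perm V)) (v : V) : Orbits N :=
  Quotient.mk (MulAction.orbitRel N V) v

/-- The quotient graph `X_N`: vertices are the `N`-orbits, two orbits being adjacent
iff some vertex of one is adjacent in `X` to some vertex of the other. -/
def quotientGraph (X : SimpleGraph V) (N : Subgroup (Equiv.Perm V)) :
    SimpleGraph (Orbits N) :=
  SimpleGraph.fromRel (fun B C => ∃ u v : V, orbitMk N u = B ∧ orbitMk N v = C ∧ X.Adj u v)

/-- `X` is an `N`-regular covering of the quotient graph `X_N`: `N` is semiregular and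
the orbit projection maps each neighbourhood bijectively onto the neighbourhood of the
corresponding orbit. -/
def IsRegularCover (X : SimpleGraph V) (N : Subgroup (Equiv.Perm V)) : Prop :=
  Semiregular N ∧
    ∀ v : V, Set.BijOn (orbitMk N) (X.neighborSet v)
      ((quotientGraph X N).neighborSet (orbitMk N v))

/-- The permutations of the orbit set induced by elements of `G` (this is the image of
the natural action of `G/N` when `N` is normal in `G`). -/
def inducedQuotSubgroup (G N : Subgroup (Equiv.Perm V)) :
    Subgroup (Equiv.Perm (Orbits N)) where
  carrier := {σ | ∃ g ∈ G, ∀ u : V, σ (orbitMk N u) = orbitMk N (g u)}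
  one_mem' := ⟨1, G.one_mem, fun u => by simp⟩
  mul_mem' := by
    rintro σ τ ⟨g, hg, hgs⟩ ⟨h, hh, hhs⟩
    refine ⟨g * h, G.mul_mem hg hh, fun u => ?_⟩
    simp [Equiv.Perm.mul_apply, hhs u, hgs (h u)]
  inv_mem' := by
    rintro σ ⟨g, hg, hgs⟩
    refine ⟨g⁻¹, G.inv_mem hg, fun u => ?_⟩
    have h1 := hgs (g⁻¹ u)
    have h2 : g (g⁻¹ u) = u := by simp
    rw [h2] at h1
    rw [← h1]
    simp

/-- A voltage assignment on the arcs of `Y` with values in the group `K`. -/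
def IsVoltage (Y : SimpleGraph W) (K : Type*) [Group K] (ξ : W → W → K) : Prop :=
  ∀ u v : W, Y.Adj u v → ξ v u = (ξ u v)⁻¹

/-- The derived graph `Y ×_ξ K` of a voltage assignment `ξ`. -/
def derivedGraph (Y : SimpleGraph W) {K : Type*} [Group K] (ξ : W → W → K) :
    SimpleGraph (W × K) :=
  SimpleGraph.fromRel (fun a b => Y.Adj a.1 b.1 ∧ b.2 = ξ a.1 b.1 * a.2)

/-- The graph `X(r; m, n)`: vertices `Z_m × Z_n`, with `(i,j)` adjacent to
`(i+1, j ± r^i)`. -/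
def XG (m : ℕ) {n : ℕ} (r : (ZMod n)ˣ) : SimpleGraph (ZMod m × ZMod n) :=
  SimpleGraph.fromRel (fun a b =>
    b.1 = a.1 + 1 ∧
      (b.2 = a.2 + (r : ZMod n) ^ (a.1.val) ∨ b.2 = a.2 - (r : ZMod n) ^ (a.1.val)))

/-- The Praeger–Xu graph `C(2;p,2)`: vertices `Z_p × Z_2 × Z_2`, with `(i,(x,y))`
adjacent to `(i+1,(y,z))`. -/
def Cp22 (p : ℕ) : SimpleGraph (ZMod p × ZMod 2 × ZMod 2) :=
  SimpleGraph.fromRel (fun a b => b.1 = a.1 + 1 ∧ b.2.1 = a.2.2)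

/-- The lexicographic product `C_n[2K_1]`: vertices `Z_n × Z_2`, with `(i,x)`
adjacent to `(j,y)` iff `j = i ± 1`. -/
def cyc2K1 (n : ℕ) : SimpleGraph (ZMod n × ZMod 2) :=
  SimpleGraph.fromRel (fun a b => b.1 = a.1 + 1)

/-- The wreath graph `W(6,2)`: vertices `Z_6 × Z_2`, with `(i,x)` adjacent to `(i+1,y)`. -/
def W62 : SimpleGraph (ZMod 6 × ZMod 2) :=
  SimpleGraph.fromRel (fun a b => b.1 = a.1 + 1)

/-- Base relation for the Rose Window graph `R_6(5,4)`: `inl i` is `S_i`, `inr i` is `Q_i`. -/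
def roseR : (ZMod 6 ⊕ ZMod 6) → (ZMod 6 ⊕ ZMod 6) → Prop
  | Sum.inl i, Sum.inl j => j = i + 1
  | Sum.inl i, Sum.inr j => j = i ∨ i = j + 5
  | Sum.inr i, Sum.inr j => j = i + 4
  | Sum.inr _, Sum.inl _ => False

/-- The Rose Window graph `R_6(5,4)`. -/
def roseWindow : SimpleGraph (ZMod 6 ⊕ ZMod 6) := SimpleGraph.fromRel roseR

/-- An elementary abelian `q`-group. -/
def IsElementaryAbelian (q : ℕ) (H : Type*) [Group H] : Prop :=
  (∀ a b : H, a * b = b * a) ∧ ∀ x : H, x ≠ 1 → orderOf x = q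

section GroupTheory

variable {G : Type*} [Group G]

theorem _root_.eq_of_ne_one_of_mul_self_eq_one (hp : (Nat.card G).Prime) {x y : G}
    (hx : x ≠ 1) (hxx : x * x = 1) (hy : y ≠ 1) : y = x := by
  have : Fact (Nat.Prime 2) := ⟨Nat.prime_two⟩
  have horder : orderOf x = 2 := orderOf_eq_prime (by rw [pow_two, hxx]) hx
  have hcard : Nat.card G = 2 :=
    ((hp.eq_one_or_self_of_dvd 2 (horder ▸ orderOf_dvd_natCard x)).resolve_left (by omega)).symm
  obtain ⟨z, -, hz⟩ := (Nat.card_eq_two_iff' (1 : G)).mp hcard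
  exact (hz y hy).trans (hz x hx).symm

theorem _root_.Subgroup.conj_eq_self_of_mul_self_eq_one {N : Subgroup G}
    (hp : (Nat.card N).Prime) {n g : G} (hn : n ∈ N) (hn1 : n ≠ 1) (hnn : n * n = 1)
    (hconj : g * n * g⁻¹ ∈ N) :
    g * n * g⁻¹ = n := by
  have h := eq_of_ne_one_of_mul_self_eq_one hp (x := ⟨n, hn⟩) (y := ⟨g * n * g⁻¹, hconj⟩)
    (by simpa [Subtype.ext_iff] using hn1) (Subtype.ext hnn)
    (by simpa [Subtype.ext_iff, conj_eq_one_iff] using hn1)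
  exact congrArg Subtype.val h

end GroupTheory

section Graphs

variable {V : Type*} {X : SimpleGraph V} {u v : V}

theorem _root_.SimpleGraph.Reachable.eq_or_eq_of_adj
    (huniq : ∀ ⦃x y z : V⦄, X.Adj x y → X.Adj x z → y = z) (huv : X.Adj u v) {w : V}
    (hw : X.Reachable u w) : w = u ∨ w = v := by
  obtain ⟨p⟩ := hw
  suffices ∀ {a b : V}, X.Walk a b → (a = u ∨ a = v) → b = u ∨ b = v from this p (.inl rfl)
  intro a b q
  induction q with
  | nil => exact id
  | cons hac _ ih =>
    rintro (rfl | rfl)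
    · exact ih (.inr (huniq hac huv))
    · exact ih (.inl (huniq hac huv.symm))

theorem _root_.natCard_le_two_of_forall_eq_or_eq (h : ∀ w : V, w = u ∨ w = v) :
    Nat.card V ≤ 2 := by
  have huniv : (Set.univ : Set V) = {u, v} := (Set.eq_univ_of_forall h).symm
  calc Nat.card V = (Set.univ : Set V).ncard := (Set.ncard_univ V).symm
    _ ≤ 2 := by rw [huniv]; exact (Set.ncard_insert_le _ _).trans (by simp)

theorem _root_.SimpleGraph.Connected.natCard_le_two_of_adj_unique (hconn : X.Connected)
    (huniq : ∀ ⦃x y z : V⦄, X.Adj x y → X.Adj x z → y = z) (huv : X.Adj u v) :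
    Nat.card V ≤ 2 :=
  natCard_le_two_of_forall_eq_or_eq fun _ =>
    (hconn.preconnected u _ : X.Reachable u _).eq_or_eq_of_adj huniq huv

theorem EdgeTransitive.apply_eq_of_adj {G : Subgroup (Equiv.Perm V)} (he : EdgeTransitive X G)
    {σ : Equiv.Perm V} (hcomm : ∀ g ∈ G, g * σ * g⁻¹ = σ) (huv : X.Adj u v) (hu : σ u = v)
    (hv : σ v = u) {x y : V} (hxy : X.Adj x y) : σ x = y := by
  obtain ⟨g, hg, ⟨rfl, rfl⟩ | ⟨rfl, rfl⟩⟩ := he huv hxy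
  · rw [← hcomm g hg]; simp [hu]
  · rw [← hcomm g hg]; simp [hv]

end Graphs

theorem stmt14_general {V : Type*} (X : SimpleGraph V) (hconn : X.Connected)
    (hcard : 3 ≤ Nat.card V) (he : EdgeTransitive X (autSubgroup X))
    (N : Subgroup (Equiv.Perm V))
    (hnorm : ∀ g ∈ autSubgroup X, ∀ n ∈ N, g * n * g⁻¹ ∈ N)
    (hprime : (Nat.card N).Prime)
    (hstab : ∀ n ∈ N, ∀ v : V, n v = v → n = 1) :
    ∀ n ∈ N, ∀ u v : V, X.Adj u v → ({n u, n v} : Set V) = {u, v} → n = 1 := by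
  intro n hn u v huv hset
  obtain ⟨hu, -⟩ | ⟨hu, hv⟩ := Set.pair_eq_pair_iff.mp hset
  · exact hstab n hn u hu
  exfalso
  have hn1 : n ≠ 1 := fun h => huv.ne (by simpa [h] using hu)
  have hnn : n * n = 1 := hstab _ (N.mul_mem hn hn) u (by simp [hu, hv])
  have hcentral : ∀ g ∈ autSubgroup X, g * n * g⁻¹ = n := fun g hg =>
    N.conj_eq_self_of_mul_self_eq_one hprime hn hn1 hnn (hnorm g hg n hn)
  have hswap := fun {x y} (hxy : X.Adj x y) => he.apply_eq_of_adj hcentral huv hu hv hxy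
  have hle := hconn.natCard_le_two_of_adj_unique
    (fun x y z hxy hxz => (hswap hxy).symm.trans (hswap hxz)) huv
  omega

/-- If `X` is a finite connected edge-transitive graph with at least 3
vertices and `N ⊴ Aut X` has prime order and trivial vertex stabilizers, then the
setwise stabilizer in `N` of every edge is trivial. -/
theorem stmt14 {V : Type*} [Fintype V] (X : SimpleGraph V) (hconn : X.Connected)
    (hcard : 3 ≤ Nat.card V) (he : EdgeTransitive X (autSubgroup X))
    (N : Subgroup (Equiv.Perm V)) (hN : N ≤ autSubgroup X)
    (hnorm : ∀ g ∈ autSubgroup X, ∀ n ∈ N, g * n * g⁻¹ ∈ N)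
    (hprime : (Nat.card N).Prime)
    (hstab : ∀ n ∈ N, ∀ v : V, n v = v → n = 1) :
    ∀ n ∈ N, ∀ u v : V, X.Adj u v → ({n u, n v} : Set V) = {u, v} → n = 1 :=
  stmt14_general X hconn hcard he N hnorm hprime hstab

end HAT
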